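/- arXiv:2603.09028 — 3 statements merged into one kernel-verified Lean document; each statement's English description precedes it below -/
import Mathlib

section
/- Let V be a real inner product space with orthogonal complex structure J and let h be symmetric with hJ = -Jh, ξ ∈ V. Then the total alternation of ξ ∧ h - (Jξ) ∧ (Jh) vanishes: the sum over cyclic permutations of ⟨(ξ ∧ h - Jξ ∧ Jh)(x, y), z⟩ is zero for all x, y, z ∈ V. -/
open scoped RealInnerProductSpace

/-- (ξ ∧ h)(x,y) = ⟨ξ,x⟩ h y - ⟨ξ,y⟩ h x. -/
noncomputable def wedgeEndo {V : Type*} [NormedAddCommGroup V] [InnerProductSpace ℝ V]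
    (ξ : V) (h : V →ₗ[ℝ] V) (x y : V) : V :=
  ⟪ξ, x⟫ • h y - ⟪ξ, y⟫ • h x

/-- the total alternation of ξ ∧ h - (Jξ) ∧ (Jh) vanishes. -/
theorem stmt5 {V : Type*} [NormedAddCommGroup V] [InnerProductSpace ℝ V]
    [FiniteDimensional ℝ V] (J h : V →ₗ[ℝ] V) (ξ : V)
    (hJ2 : ∀ x : V, J (J x) = -x)
    (hJorth : ∀ x y : V, ⟪J x, J y⟫ = ⟪x, y⟫)
    (hsym : ∀ x y : V, ⟪h x, y⟫ = ⟪x, h y⟫)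
    (hanti : h ∘ₗ J = -(J ∘ₗ h)) :
    ∀ x y z : V,
      ⟪wedgeEndo ξ h x y - wedgeEndo (J ξ) (J ∘ₗ h) x y, z⟫
      + ⟪wedgeEndo ξ h y z - wedgeEndo (J ξ) (J ∘ₗ h) y z, x⟫
      + ⟪wedgeEndo ξ h z x - wedgeEndo (J ξ) (J ∘ₗ h) z x, y⟫ = 0 := by

  have S : ∀ a b : V, ⟪h a, b⟫ = ⟪h b, a⟫ := fun a b =>
    (hsym a b).trans (real_inner_comm (h b) a)
  have hJskew : ∀ a b : V, ⟪J a, b⟫ = -⟪a, J b⟫ := by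
    intro a b
    have := hJorth a (J b)
    rw [hJ2, inner_neg_right] at this
    linarith
  have hanti' : ∀ a : V, h (J a) = -(J (h a)) := by
    intro a
    have := LinearMap.ext_iff.mp hanti a
    simpa using this
  have B : ∀ a b : V, ⟪J (h a), b⟫ = ⟪J (h b), a⟫ := by
    intro a b
    calc ⟪J (h a), b⟫ = -⟪h a, J b⟫ := hJskew (h a) b
      _ = -⟪a, h (J b)⟫ := by rw [hsym]
      _ = ⟪a, J (h b)⟫ := by rw [hanti', inner_neg_right, neg_neg]
      _ = ⟪J (h b), a⟫ := real_inner_comm _ _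
  intro x y z
  simp only [wedgeEndo, LinearMap.comp_apply, inner_sub_left, real_inner_smul_left]
  linear_combination ⟪ξ, x⟫ * S y z + ⟪ξ, y⟫ * S z x + ⟪ξ, z⟫ * S x y
    - ⟪J ξ, x⟫ * B y z - ⟪J ξ, y⟫ * B z x - ⟪J ξ, z⟫ * B x y
end

section
/- Let (M, g, J) be a Kähler manifold and h a symmetric J-anticommuting (1,1)-tensor field. With ∂h = (1/2)(dh + dh(J·,J·)) and ∂̄h = (1/2)(dh - dh(J·,J·)), the projection of h♯∂h to λ²₊ satisfies: 2(h♯∂h)₊ = dh² - (dh²)(J·, J·) - 2h∘∂̄h, where (h♯α)(x,y) = α(hx,y) + α(x,hy), (h∘α)(x,y) = h(α(x,y)), and the λ²₊-projection of a form γ with γ(J·,J·) = -γ is 2γ₊(x,y) = γ(x,y) - Jγ(x,Jy). -/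
open scoped RealInnerProductSpace

def dF {V : Type*} [AddCommGroup V] [Module ℝ V]
    (Dh : V → (V →ₗ[ℝ] V)) (X Y : V) : V := Dh X Y - Dh Y X

/-- ∂h := (1/2)(dh + dh(J·, J·)). -/
noncomputable def delP {V : Type*} [AddCommGroup V] [Module ℝ V]
    (J : V →ₗ[ℝ] V) (Dh : V → (V →ₗ[ℝ] V)) (X Y : V) : V :=
  (2:ℝ)⁻¹ • (dF Dh X Y + dF Dh (J X) (J Y))

/-- ∂̄h := (1/2)(dh - dh(J·, J·)). -/
noncomputable def delB {V : Type*} [AddCommGroup V] [Module ℝ V]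
    (J : V →ₗ[ℝ] V) (Dh : V → (V →ₗ[ℝ] V)) (X Y : V) : V :=
  (2:ℝ)⁻¹ • (dF Dh X Y - dF Dh (J X) (J Y))

/-- (h ♯ α)(X,Y) = α(hX,Y) + α(X,hY). -/
def sharp {V : Type*} [AddCommGroup V] [Module ℝ V]
    (h : V →ₗ[ℝ] V) (α : V → V → V) (X Y : V) : V := α (h X) Y + α X (h Y)

/-- for a symmetric J-anticommuting h on a Kähler manifold,
2(h♯∂h)₊ = dh² - (dh²)(J·,J·) - 2 h∘∂̄h, where the λ²₊-projection is
2γ₊(X,Y) = γ(X,Y) - Jγ(X,JY).  Here `Dh2 X = ∇_X(h²)` obeys the Leibniz rule. -/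
theorem stmt10 {V : Type*} [NormedAddCommGroup V] [InnerProductSpace ℝ V]
    (J h : V →ₗ[ℝ] V) (Dh Dh2 : V → (V →ₗ[ℝ] V))
    (hJ2 : ∀ x : V, J (J x) = -x)
    (hJorth : ∀ x y : V, ⟪J x, J y⟫ = ⟪x, y⟫)
    (hsym : ∀ x y : V, ⟪h x, y⟫ = ⟪x, h y⟫)
    (hanti : h ∘ₗ J = -(J ∘ₗ h))
    (hDadd : ∀ X Y : V, Dh (X + Y) = Dh X + Dh Y)
    (hDsmul : ∀ (c : ℝ) (X : V), Dh (c • X) = c • Dh X)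
    (hDanti : ∀ X : V, Dh X ∘ₗ J = -(J ∘ₗ Dh X))
    (hLeib : ∀ X : V, Dh2 X = Dh X ∘ₗ h + h ∘ₗ Dh X) :
    ∀ X Y : V,
      sharp h (delP J Dh) X Y - J (sharp h (delP J Dh) X (J Y))
        = dF Dh2 X Y - dF Dh2 (J X) (J Y) - (2:ℝ) • h (delB J Dh X Y) := by
  intro X Y
  have hJ' : ∀ x : V, h (J x) = -J (h x) := fun x => by
    have := congrFun (congrArg DFunLike.coe hanti) x; simpa using this
  have hJh : ∀ x : V, J (h x) = -h (J x) := fun x => by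
    rw [hJ' x, neg_neg]
  have hD' : ∀ (Z y : V), Dh Z (J y) = -J (Dh Z y) := fun Z y => by
    have := congrFun (congrArg DFunLike.coe (hDanti Z)) y; simpa using this
  have hneg : ∀ Z : V, Dh (-Z) = -Dh Z := fun Z => by
    have := hDsmul (-1 : ℝ) Z; simpa using this
  simp only [sharp, delP, delB, dF, hLeib, LinearMap.add_apply, LinearMap.comp_apply,
    LinearMap.neg_apply, hJ', hneg, hD', hJ2, map_neg, map_add, map_sub, map_smul,
    smul_add, smul_sub, smul_neg, neg_neg, neg_add, neg_sub]
  module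
end

section
/- Let (M, g, J) be a Kähler manifold and h a symmetric J-anticommuting (1,1)-tensor field. The Kodaira–Spencer bracket, defined as the λ²₋-component of the (1,1)-anti-invariant part of [h,h]^FN, satisfies [h,h]^c = (1/2)([h,h]^FN - [Jh,Jh]^FN) = -(1/2)(h♯∂h - (Jh)♯∂(Jh)). -/
open scoped RealInnerProductSpace

/-- The Frölicher–Nijenhuis bracket [k,k]^FN(X,Y) = -(∇_{kX}k)Y + (∇_{kY}k)X + k(dk(X,Y))
from the pointwise data `Dk X = ∇_X k`. -/
def FNb {V : Type*} [AddCommGroup V] [Module ℝ V]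
    (k : V →ₗ[ℝ] V) (Dk : V → (V →ₗ[ℝ] V)) (X Y : V) : V :=
  -(Dk (k X) Y) + Dk (k Y) X + k (dF Dk X Y)

/-- The Kodaira–Spencer bracket, defined as the λ²₋-projection of
[h,h]^{FN,-}(X,Y) = (1/2)([h,h]^FN(X,Y) - [h,h]^FN(JX,JY)). -/
noncomputable def KSproj {V : Type*} [AddCommGroup V] [Module ℝ V]
    (J h : V →ₗ[ℝ] V) (Dh : V → (V →ₗ[ℝ] V)) (X Y : V) : V :=
  (2:ℝ)⁻¹ • ((2:ℝ)⁻¹ • (FNb h Dh X Y - FNb h Dh (J X) (J Y))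
    + J ((2:ℝ)⁻¹ • (FNb h Dh X (J Y) - FNb h Dh (J X) (J (J Y)))))

/-- for a symmetric J-anticommuting h on a Kähler manifold,
[h,h]^c = (1/2)([h,h]^FN - [Jh,Jh]^FN) = -(1/2)(h♯∂h - (Jh)♯∂(Jh)). -/
theorem stmt12 {V : Type*} [NormedAddCommGroup V] [InnerProductSpace ℝ V]
    (J h : V →ₗ[ℝ] V) (Dh : V → (V →ₗ[ℝ] V))
    (hJ2 : ∀ x : V, J (J x) = -x)
    (hJorth : ∀ x y : V, ⟪J x, J y⟫ = ⟪x, y⟫)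
    (hsym : ∀ x y : V, ⟪h x, y⟫ = ⟪x, h y⟫)
    (hanti : h ∘ₗ J = -(J ∘ₗ h))
    (hDadd : ∀ X Y : V, Dh (X + Y) = Dh X + Dh Y)
    (hDsmul : ∀ (c : ℝ) (X : V), Dh (c • X) = c • Dh X)
    (hDanti : ∀ X : V, Dh X ∘ₗ J = -(J ∘ₗ Dh X)) :
    (∀ X Y : V,
      KSproj J h Dh X Y
        = (2:ℝ)⁻¹ • (FNb h Dh X Y - FNb (J ∘ₗ h) (fun Z => J ∘ₗ Dh Z) X Y)) ∧
    (∀ X Y : V,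
      KSproj J h Dh X Y
        = -((2:ℝ)⁻¹ • (sharp h (delP J Dh) X Y
            - sharp (J ∘ₗ h) (delP J (fun Z => J ∘ₗ Dh Z)) X Y))) := by
  have hJh : ∀ x : V, h (J x) = -(J (h x)) := by
    intro x; have := congrFun (congrArg DFunLike.coe hanti) x; simpa using this
  have hDJ : ∀ X Y : V, Dh X (J Y) = -(J (Dh X Y)) := by
    intro X Y; have := congrFun (congrArg DFunLike.coe (hDanti X)) Y; simpa using this
  have hDneg : ∀ X : V, Dh (-X) = -Dh X := by
    intro X; have := hDsmul (-1) X; simpa using this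
  constructor <;> intro X Y <;>
    simp only [KSproj, FNb, dF, delP, sharp, LinearMap.comp_apply, hJh, hJ2, hDJ, hDneg,
      hDadd, hDsmul, map_neg, map_add, map_smul, map_sub, LinearMap.neg_apply,
      LinearMap.add_apply, LinearMap.smul_apply, smul_neg, neg_neg, smul_add, smul_sub] <;>
    module
end
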